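/- Let A, M be real J×N matrices, Γ a symmetric positive definite J×J matrix, and B₀ a symmetric positive definite N×N matrix. Define B_{ℓ+1} = R(B_ℓ) with R(B) = Aᵀ(Γ + MB⁻¹Mᵀ)⁻¹A + B₀, starting from B₀. Then the sequence {B_ℓ} is non-decreasing in the Loewner order and there exists a symmetric positive definite matrix B such that B_ℓ → B entrywise as ℓ → ∞. Consequently, the covariance matrices C_ℓ = B_ℓ⁻¹ form a non-increasing sequence in the Loewner order converging entrywise to C = B⁻¹. -/

import Mathlib

/-!
Inversion is antitone in the Loewner order on positive definite matrices and congruence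
`S ↦ Xᵀ S X` is monotone, so `R` is monotone; since `B₀ ≤ B₁`, the iterates increase. Since
`Γ ≤ Γ + M B⁻¹ Mᵀ`, they are bounded above by `Aᵀ Γ⁻¹ A + B₀`. An increasing bounded sequence of
symmetric matrices converges: its quadratic forms are increasing bounded real sequences, and the
entries are recovered from them by polarization. The limit dominates `B₀`, so it is positive
definite, and continuity of inversion there gives the statements about `C_ℓ = B_ℓ⁻¹`.
-/

open Matrix Filter

/-- The precision iterates `B₀, B_{ℓ+1} = R(B_ℓ) = Aᵀ(Γ + M B_ℓ⁻¹ Mᵀ)⁻¹A + B₀`. -/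
noncomputable def Bseq {N J : ℕ}
    (A M : Matrix (Fin J) (Fin N) ℝ) (Γ : Matrix (Fin J) (Fin J) ℝ)
    (B₀ : Matrix (Fin N) (Fin N) ℝ) : ℕ → Matrix (Fin N) (Fin N) ℝ
  | 0 => B₀
  | (ℓ + 1) => Aᵀ * (Γ + M * (Bseq A M Γ B₀ ℓ)⁻¹ * Mᵀ)⁻¹ * A + B₀

open scoped MatrixOrder ComplexOrder Topology

namespace Matrix

section Loewner

variable {m n 𝕜 : Type*} [RCLike 𝕜]

lemma conjTranspose_mul_mul_le_conjTranspose_mul_mul [Fintype m] [Fintype n]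
    {S T : Matrix m m 𝕜} (h : S ≤ T) (X : Matrix m n 𝕜) : Xᴴ * S * X ≤ Xᴴ * T * X := by
  rw [le_iff, ← Matrix.sub_mul, ← Matrix.mul_sub]
  exact (le_iff.mp h).conjTranspose_mul_mul_same X

lemma PosDef.of_le {S T : Matrix m m 𝕜} (hS : S.PosDef) (h : S ≤ T) : T.PosDef := by
  simpa using hS.add_posSemidef (le_iff.mp h)

lemma PosDef.inv_le_inv [Fintype m] [DecidableEq m] {S T : Matrix m m 𝕜} (hT : T.PosDef)
    (h : T ≤ S) : S⁻¹ ≤ T⁻¹ := by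
  set D := S - T
  have hD : D.PosSemidef := le_iff.mp h
  have hS : S.PosDef := hT.of_le h
  have : Invertible S := hS.isUnit.invertible
  have : Invertible T := hT.isUnit.invertible
  have key : T⁻¹ - S⁻¹ = S⁻¹ᴴ * (D + Dᴴ * T⁻¹ * D) * S⁻¹ := by
    rw [hS.inv.isHermitian.eq, hD.isHermitian.eq, ← invOf_eq_nonsing_inv S,
      ← invOf_eq_nonsing_inv T]
    simp [D, sub_mul, mul_sub, mul_assoc]
  rw [le_iff, key]
  exact (hD.add (hT.inv.posSemidef.conjTranspose_mul_mul_same D)).conjTranspose_mul_mul_same _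

lemma isClosed_setOf_posSemidef [Fintype n] : IsClosed {A : Matrix n n 𝕜 | A.PosSemidef} := by
  simp only [posSemidef_iff_dotProduct_mulVec, Set.ofPred_and, Set.ofPred_forall]
  refine (isClosed_eq continuous_id.matrix_conjTranspose continuous_id).inter
    (isClosed_iInter fun x => isClosed_le continuous_const ?_)
  fun_prop

instance orderClosedTopology [Fintype n] : OrderClosedTopology (Matrix n n 𝕜) where
  isClosed_le' := isClosed_le_of_isClosed_nonneg <| by
    simpa only [nonneg_iff_posSemidef] using isClosed_setOf_posSemidef

end Loewner

lemma transpose_mul_mul_le_transpose_mul_mul {m n : Type*} [Fintype m] [Fintype n]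
    {S T : Matrix m m ℝ} (h : S ≤ T) (X : Matrix m n ℝ) : Xᵀ * S * X ≤ Xᵀ * T * X := by
  simpa using conjTranspose_mul_mul_le_conjTranspose_mul_mul h X

lemma PosSemidef.mul_inv_mul_transpose {m n : Type*} [Fintype m] [Fintype n]
    [DecidableEq n] {B : Matrix n n ℝ} (hB : B.PosSemidef) (M : Matrix m n ℝ) :
    (M * B⁻¹ * Mᵀ).PosSemidef := by
  simpa using hB.inv.conjTranspose_mul_mul_same Mᵀ

variable {n : Type*} [Fintype n] [DecidableEq n]

lemma IsHermitian.apply_eq_polarization {A : Matrix n n ℝ} (hA : A.IsHermitian) (i j : n) :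
    A i j = ((Pi.single i 1 + Pi.single j 1) ⬝ᵥ A *ᵥ (Pi.single i 1 + Pi.single j 1)
      - Pi.single i 1 ⬝ᵥ A *ᵥ Pi.single i 1 - Pi.single j 1 ⬝ᵥ A *ᵥ Pi.single j 1) / 2 := by
  have hji : A j i = A i j := by simpa using congrFun₂ hA i j
  simp only [mulVec_add, mulVec_single, MulOpposite.op_one, one_smul, dotProduct_add,
    add_dotProduct, single_dotProduct, col_apply, one_mul, hji]
  ring

lemma exists_tendsto_of_monotone_of_le {f : ℕ → Matrix n n ℝ} {U : Matrix n n ℝ}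
    (hherm : ∀ k, (f k).IsHermitian) (hf : Monotone f) (hU : ∀ k, f k ≤ U) :
    ∃ B, Tendsto f atTop (𝓝 B) := by
  have hquad (x : n → ℝ) : ∃ L, Tendsto (fun k => x ⬝ᵥ f k *ᵥ x) atTop (𝓝 L) := by
    have hq {S T : Matrix n n ℝ} (h : S ≤ T) : x ⬝ᵥ S *ᵥ x ≤ x ⬝ᵥ T *ᵥ x := by
      simpa [sub_mulVec] using (le_iff.mp h).dotProduct_mulVec_nonneg x
    exact ⟨_, tendsto_atTop_ciSup (fun k l hkl => hq (hf hkl))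
      ⟨x ⬝ᵥ U *ᵥ x, Set.forall_mem_range.mpr fun k => hq (hU k)⟩⟩
  choose L hL using hquad
  refine ⟨of fun i j => (L (Pi.single i 1 + Pi.single j 1) - L (Pi.single i 1)
      - L (Pi.single j 1)) / 2, tendsto_pi_nhds.mpr fun i => tendsto_pi_nhds.mpr fun j => ?_⟩
  simp_rw [(hherm _).apply_eq_polarization i j]
  exact (((hL _).sub (hL _)).sub (hL _)).div_const 2

lemma continuousAt_inv_of_det_ne_zero {K : Type*} [NormedField K] {A : Matrix n n K}
    (hA : A.det ≠ 0) : ContinuousAt Inv.inv A := by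
  refine continuousAt_matrix_inv A ?_
  rw [Ring.inverse_eq_inv']
  exact continuousAt_inv₀ hA

end Matrix

section PrecisionIteration

variable {m n : Type*} [Fintype m] [Fintype n] [DecidableEq m] [DecidableEq n]
  (A M : Matrix m n ℝ) (Γ : Matrix m m ℝ) (B₀ : Matrix n n ℝ)

/-- The map `R` of the model-error algorithm. -/
noncomputable def precisionUpdate (B : Matrix n n ℝ) : Matrix n n ℝ :=
  Aᵀ * (Γ + M * B⁻¹ * Mᵀ)⁻¹ * A + B₀

variable {A M Γ B₀}

lemma le_precisionUpdate (hΓ : Γ.PosSemidef) {B : Matrix n n ℝ} (hB : B.PosSemidef) :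
    B₀ ≤ precisionUpdate A M Γ B₀ B := by
  refine le_add_of_nonneg_left (PosSemidef.nonneg ?_)
  simpa using ((hΓ.add (hB.mul_inv_mul_transpose M)).inv.conjTranspose_mul_mul_same A)

lemma precisionUpdate_le (hΓ : Γ.PosDef) {B : Matrix n n ℝ} (hB : B.PosSemidef) :
    precisionUpdate A M Γ B₀ B ≤ Aᵀ * Γ⁻¹ * A + B₀ := by
  have hΓ_le : Γ ≤ Γ + M * B⁻¹ * Mᵀ :=
    le_add_of_nonneg_right (hB.mul_inv_mul_transpose M).nonneg
  exact add_le_add_left (transpose_mul_mul_le_transpose_mul_mul (hΓ.inv_le_inv hΓ_le) A) B₀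

lemma precisionUpdate_mono (hΓ : Γ.PosDef) {C D : Matrix n n ℝ} (hC : C.PosDef) (hCD : C ≤ D) :
    precisionUpdate A M Γ B₀ C ≤ precisionUpdate A M Γ B₀ D := by
  have hD : D.PosDef := hC.of_le hCD
  have hle : Γ + M * D⁻¹ * Mᵀ ≤ Γ + M * C⁻¹ * Mᵀ :=
    add_le_add_right (by
      simpa using transpose_mul_mul_le_transpose_mul_mul (hC.inv_le_inv hCD) Mᵀ) Γ
  have hpos : (Γ + M * D⁻¹ * Mᵀ).PosDef :=
    hΓ.add_posSemidef (hD.posSemidef.mul_inv_mul_transpose M)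
  exact add_le_add_left (transpose_mul_mul_le_transpose_mul_mul (hpos.inv_le_inv hle) A) B₀

end PrecisionIteration

section Bseq

variable {N J : ℕ} {A M : Matrix (Fin J) (Fin N) ℝ} {Γ : Matrix (Fin J) (Fin J) ℝ}
  {B₀ : Matrix (Fin N) (Fin N) ℝ}

lemma posDef_Bseq (hΓ : Γ.PosSemidef) (hB₀ : B₀.PosDef) : ∀ ℓ, (Bseq A M Γ B₀ ℓ).PosDef
  | 0 => hB₀
  | ℓ + 1 => hB₀.of_le (le_precisionUpdate hΓ (posDef_Bseq hΓ hB₀ ℓ).posSemidef)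

lemma monotone_Bseq (hΓ : Γ.PosDef) (hB₀ : B₀.PosDef) : Monotone (Bseq A M Γ B₀) := by
  refine monotone_nat_of_le_succ fun ℓ => ?_
  induction ℓ with
  | zero => exact le_precisionUpdate hΓ.posSemidef hB₀.posSemidef
  | succ ℓ ih => exact precisionUpdate_mono hΓ (posDef_Bseq hΓ.posSemidef hB₀ ℓ) ih

lemma Bseq_le (hΓ : Γ.PosDef) (hB₀ : B₀.PosDef) (ℓ : ℕ) :
    Bseq A M Γ B₀ ℓ ≤ Aᵀ * Γ⁻¹ * A + B₀ := by
  cases ℓ with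
  | zero =>
    refine le_add_of_nonneg_left (PosSemidef.nonneg ?_)
    simpa using hΓ.inv.posSemidef.conjTranspose_mul_mul_same A
  | succ ℓ => exact precisionUpdate_le hΓ (posDef_Bseq hΓ.posSemidef hB₀ ℓ).posSemidef

end Bseq

/-- The precision iterates are non-decreasing in the Loewner order and converge entrywise to a
symmetric positive definite matrix `B`; consequently the covariances `C_ℓ = B_ℓ⁻¹` are
non-increasing in the Loewner order and converge entrywise to `C = B⁻¹`. -/
theorem stmt_13 {N J : ℕ}
    (A M : Matrix (Fin J) (Fin N) ℝ) (Γ : Matrix (Fin J) (Fin J) ℝ)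
    (B₀ : Matrix (Fin N) (Fin N) ℝ)
    (hΓ : Γ.PosDef) (hB₀ : B₀.PosDef) :
    (∀ ℓ : ℕ, (Bseq A M Γ B₀ (ℓ + 1) - Bseq A M Γ B₀ ℓ).PosSemidef) ∧
      ∃ B : Matrix (Fin N) (Fin N) ℝ, B.PosDef ∧
        (∀ i j, Tendsto (fun ℓ => Bseq A M Γ B₀ ℓ i j) atTop (nhds (B i j))) ∧
        (∀ ℓ : ℕ, ((Bseq A M Γ B₀ ℓ)⁻¹ - (Bseq A M Γ B₀ (ℓ + 1))⁻¹).PosSemidef) ∧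
        (∀ i j, Tendsto (fun ℓ => (Bseq A M Γ B₀ ℓ)⁻¹ i j) atTop (nhds (B⁻¹ i j))) := by
  have hpos : ∀ ℓ, (Bseq A M Γ B₀ ℓ).PosDef := posDef_Bseq hΓ.posSemidef hB₀
  have hmono : Monotone (Bseq A M Γ B₀) := monotone_Bseq hΓ hB₀
  obtain ⟨B, hlim⟩ := exists_tendsto_of_monotone_of_le (fun ℓ => (hpos ℓ).isHermitian) hmono
    (Bseq_le hΓ hB₀)
  have hB : B.PosDef := hB₀.of_le (hmono.ge_of_tendsto hlim 0)
  refine ⟨fun ℓ => hmono ℓ.le_succ, B, hB, fun i j => (hlim.apply_nhds i).apply_nhds j,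
    fun ℓ => (hpos ℓ).inv_le_inv (hmono ℓ.le_succ), fun i j => ?_⟩
  have hinv := (continuousAt_inv_of_det_ne_zero hB.det_pos.ne').tendsto.comp hlim
  exact (hinv.apply_nhds i).apply_nhds j
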